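/- arXiv:math/0008082 — 3 statements merged into one kernel-verified Lean document; each statement's English description precedes it below -/
import Mathlib

section
/- In the Laurent polynomial ring ℤ[t, x, x⁻¹], for every d ≥ 1: (1+tx)^d · (1 + ∑_{ℓ=1}^{d-1} ℓ·C(d,ℓ+1)·t^{ℓ+1}·x^{ℓ}) = (1+tx)^d + x⁻¹·(1+tx)^d + d·t·(1+tx)^{2d−1} − x⁻¹·(1+tx)^{2d}. -/
open Finset LaurentPolynomial

/-- The Laurent polynomial ring `ℤ[t, x, x⁻¹]`, realized as Laurent polynomials in `x`
with coefficients in `ℤ[t]`. -/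
abbrev LP := LaurentPolynomial (Polynomial ℤ)

/-- the variable `t` -/
noncomputable def tv : LP := LaurentPolynomial.C Polynomial.X

/-- the variable `x` -/
noncomputable def xv : LP := LaurentPolynomial.T 1

/-- `x⁻¹` -/
noncomputable def xinv : LP := LaurentPolynomial.T (-1)

lemma xinv_mul_xv : xinv * xv = 1 := by
  rw [xinv, xv, ← LaurentPolynomial.T_add]
  norm_num

lemma expand (n : ℕ) :
    (1 + tv * xv) ^ n = ∑ k ∈ Finset.range (n + 1),
      (Nat.choose n k : LP) * tv ^ k * xv ^ k := by
  rw [add_comm, add_pow]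
  refine Finset.sum_congr rfl fun k _ => ?_
  rw [mul_pow, one_pow]
  ring

lemma key (d : ℕ) (hd : 1 ≤ d) :
    ∑ ℓ ∈ Finset.Icc 1 (d - 1),
        (ℓ : LP) * (Nat.choose d (ℓ + 1) : LP) * tv ^ (ℓ + 1) * xv ^ ℓ =
      xinv + (d : LP) * tv * (1 + tv * xv) ^ (d - 1) - xinv * (1 + tv * xv) ^ d := by
  rw [expand, expand, Nat.sub_add_cancel hd, Finset.mul_sum, Finset.mul_sum,
    Finset.sum_range_succ' (fun k => xinv * ((Nat.choose d k : LP) * tv ^ k * xv ^ k)) d]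
  simp only [Nat.choose_zero_right, Nat.cast_one, pow_zero, one_mul, mul_one]
  have hre : ∀ a b : LP, xinv + a - (b + xinv) = a - b := fun a b => by ring
  rw [hre, ← Finset.sum_sub_distrib]
  have h1 : ∀ k ∈ Finset.range d,
      (d : LP) * tv * ((Nat.choose (d - 1) k : LP) * tv ^ k * xv ^ k) -
        xinv * ((Nat.choose d (k + 1) : LP) * tv ^ (k + 1) * xv ^ (k + 1)) =
      (k : LP) * (Nat.choose d (k + 1) : LP) * tv ^ (k + 1) * xv ^ k := by
    intro k _
    have hd2 : (d : LP) * (Nat.choose (d - 1) k : LP) =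
        ((k : LP) + 1) * (Nat.choose d (k + 1) : LP) := by
      have := Nat.add_one_mul_choose_eq (d - 1) k
      have hsd : d - 1 + 1 = d := by omega
      rw [hsd] at this
      have h3 : d * (d - 1).choose k = (k + 1) * d.choose (k + 1) := by
        rw [this, mul_comm]
      have h4 : ((d * (d - 1).choose k : ℕ) : LP) = (((k + 1) * d.choose (k + 1) : ℕ) : LP) := by
        rw [h3]
      push_cast at h4
      linear_combination h4
    have hx : xinv * xv ^ (k + 1) = xv ^ k := by
      rw [pow_succ, ← mul_assoc]
      nth_rewrite 1 [mul_comm xinv]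
      rw [mul_assoc, xinv_mul_xv, mul_one]
    calc (d : LP) * tv * ((Nat.choose (d - 1) k : LP) * tv ^ k * xv ^ k) -
          xinv * ((Nat.choose d (k + 1) : LP) * tv ^ (k + 1) * xv ^ (k + 1))
        = (d : LP) * (Nat.choose (d - 1) k : LP) * tv ^ (k + 1) * xv ^ k -
          (Nat.choose d (k + 1) : LP) * tv ^ (k + 1) * (xinv * xv ^ (k + 1)) := by ring
      _ = ((k : LP) + 1) * (Nat.choose d (k + 1) : LP) * tv ^ (k + 1) * xv ^ k -
          (Nat.choose d (k + 1) : LP) * tv ^ (k + 1) * xv ^ k := by rw [hd2, hx]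
      _ = (k : LP) * (Nat.choose d (k + 1) : LP) * tv ^ (k + 1) * xv ^ k := by ring
  rw [Finset.sum_congr rfl h1]
  symm
  refine (Finset.sum_subset ?_ ?_).symm
  · intro k hk
    simp only [Finset.mem_Icc] at hk
    simp only [Finset.mem_range]
    omega
  · intro k hk hk'
    obtain rfl : k = 0 := by
      simp only [Finset.mem_range] at hk
      simp only [Finset.mem_Icc, not_and, not_le] at hk'
      omega
    simp

theorem stmt_2 (d : ℕ) (hd : 1 ≤ d) :
    (1 + tv * xv) ^ d *
        (1 + ∑ ℓ ∈ Finset.Icc 1 (d - 1),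
            (ℓ : LP) * (Nat.choose d (ℓ + 1) : LP) * tv ^ (ℓ + 1) * xv ^ ℓ) =
      (1 + tv * xv) ^ d + xinv * (1 + tv * xv) ^ d + (d : LP) * tv * (1 + tv * xv) ^ (2 * d - 1)
        - xinv * (1 + tv * xv) ^ (2 * d) := by
  rw [key d hd]
  have h1 : (1 + tv * xv) ^ d * (1 + tv * xv) ^ (d - 1) = (1 + tv * xv) ^ (2 * d - 1) := by
    rw [← pow_add]; congr 1; omega
  have h2 : (1 + tv * xv) ^ d * (1 + tv * xv) ^ d = (1 + tv * xv) ^ (2 * d) := by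
    rw [← pow_add]; congr 1; omega
  calc (1 + tv * xv) ^ d *
        (1 + (xinv + (d : LP) * tv * (1 + tv * xv) ^ (d - 1) - xinv * (1 + tv * xv) ^ d))
      = (1 + tv * xv) ^ d + xinv * (1 + tv * xv) ^ d +
          (d : LP) * tv * ((1 + tv * xv) ^ d * (1 + tv * xv) ^ (d - 1)) -
          xinv * ((1 + tv * xv) ^ d * (1 + tv * xv) ^ d) := by ring
    _ = _ := by rw [h1, h2]
end

section
/- Let k be a field and consider the polynomial ring k[x, y, z, u, v]. The radical of the ideal J = (xz − y², xu − yv, yu − zv, u², uv, v²) equals the ideal I = (xz − y², u, v). -/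
open MvPolynomial

noncomputable section

variable (k : Type*) [Field k]

/-- the variables x, y, z, u, v of `k[x,y,z,u,v]` -/
abbrev S (k : Type*) [Field k] := MvPolynomial (Fin 5) k

namespace Stmt5Aux

/-- the base ring `k[x,z]` in two variables -/
abbrev R2 (k : Type*) [Field k] := MvPolynomial (Fin 2) k

/-- the polynomial `Y^2 - xz` over `k[x,z]` -/
def pq (k : Type*) [Field k] : Polynomial (R2 k) :=
  Polynomial.X ^ 2 - Polynomial.C (X 0 * X 1)

lemma pq_monic : (pq k).Monic := Polynomial.monic_X_pow_sub_C _ two_ne_zero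

lemma pq_natDegree : (pq k).natDegree = 2 := Polynomial.natDegree_X_pow_sub_C

lemma pq_coeff_zero : (pq k).coeff 0 = -(X 0 * X 1) := by
  simp [pq, Polynomial.coeff_X_pow]

lemma pq_coeff_one : (pq k).coeff 1 = 0 := by
  simp [pq, Polynomial.coeff_X_pow]

lemma prime_X0 : Prime (X 0 : R2 k) := by
  rw [← MulEquiv.prime_iff (MvPolynomial.finSuccEquiv k 1).toMulEquiv]
  have h : (MvPolynomial.finSuccEquiv k 1).toMulEquiv (X 0) = Polynomial.X := by
    simpa using MvPolynomial.finSuccEquiv_X_zero (R := k) (n := 1)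
  rw [h]
  exact Polynomial.prime_X

lemma X0_not_dvd_X1 : ¬ (X 0 : R2 k) ∣ X 1 := by
  intro h
  have h2 := map_dvd (MvPolynomial.eval (![0, 1] : Fin 2 → k)) h
  simp only [eval_X, Matrix.cons_val_zero, Matrix.cons_val_one, Matrix.head_cons,
    zero_dvd_iff] at h2
  exact one_ne_zero h2

lemma pq_irreducible : Irreducible (pq k) := by
  have hprime : (Ideal.span {(X 0 : R2 k)}).IsPrime :=
    (Ideal.span_singleton_prime (MvPolynomial.X_ne_zero 0)).mpr (prime_X0 k)
  refine Polynomial.IsEisensteinAt.irreducible ?_ hprime (pq_monic k).isPrimitive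
    (by rw [pq_natDegree]; norm_num)
  refine (pq_monic k).isEisensteinAt_of_mem_of_notMem hprime.ne_top ?_ ?_
  · intro n hn
    rw [pq_natDegree] at hn
    interval_cases n
    · rw [pq_coeff_zero]
      exact neg_mem (Ideal.mem_span_singleton.mpr ⟨X 1, rfl⟩)
    · rw [pq_coeff_one]
      exact Ideal.zero_mem _
  · rw [pq_coeff_zero, Ideal.span_singleton_pow, Ideal.mem_span_singleton]
    intro h
    rw [dvd_neg, pow_two] at h
    exact X0_not_dvd_X1 k ((mul_dvd_mul_iff_left (MvPolynomial.X_ne_zero 0)).mp h)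

lemma span_pq_isPrime : (Ideal.span {pq k}).IsPrime :=
  (Ideal.span_singleton_prime (pq_monic k).ne_zero).mpr
    (UniqueFactorizationMonoid.irreducible_iff_prime.mp (pq_irreducible k))

/-- the coordinate ring `k[x,z][Y]/(Y^2 - xz)` of the affine quadric cone -/
abbrev D (k : Type*) [Field k] := Polynomial (R2 k) ⧸ Ideal.span {pq k}

instance : IsDomain (D k) := by
  haveI := span_pq_isPrime k
  exact (Ideal.Quotient.isDomain_iff_prime _).mpr (span_pq_isPrime k)

/-- the ideal `(xz - y^2, u, v)` -/
def II (k : Type*) [Field k] : Ideal (S k) :=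
  Ideal.span {(X 0 * X 2 - X 1 ^ 2 : S k), X 3, X 4}

/-- the quotient map onto `D k` -/
def mkD (k : Type*) [Field k] : Polynomial (R2 k) →+* D k :=
  Ideal.Quotient.mk (Ideal.span {pq k})

/-- the map `k[x,y,z,u,v] → D` sending `x ↦ x, y ↦ Y, z ↦ z, u ↦ 0, v ↦ 0` -/
def F (k : Type*) [Field k] : S k →ₐ[k] D k :=
  aeval ![mkD k (Polynomial.C (X 0)), mkD k Polynomial.X, mkD k (Polynomial.C (X 1)), 0, 0]

lemma II_le_ker : II k ≤ RingHom.ker (F k).toRingHom := by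
  rw [II, Ideal.span_le]
  rintro p hp
  simp only [Set.mem_insert_iff, Set.mem_singleton_iff] at hp
  rcases hp with rfl | rfl | rfl
  · show F k (X 0 * X 2 - X 1 ^ 2) = 0
    rw [map_sub, map_mul, map_pow]
    simp only [F, aeval_X, Matrix.cons_val_zero, Matrix.cons_val_one, Matrix.head_cons]
    show mkD k (Polynomial.C (X 0)) * mkD k (Polynomial.C (X 1)) - mkD k Polynomial.X ^ 2 = 0
    rw [← map_mul, ← map_pow, ← map_sub, mkD]
    rw [Ideal.Quotient.eq_zero_iff_mem]
    have : Polynomial.C (X 0 : R2 k) * Polynomial.C (X 1) - Polynomial.X ^ 2 = -(pq k) := by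
      rw [pq, map_mul]; ring
    rw [this]
    exact neg_mem (Ideal.subset_span rfl)
  · show F k (X 3) = 0
    simp [F]
  · show F k (X 4) = 0
    simp [F]

/-- the quotient map onto `S k ⧸ II k` -/
def mkQ (k : Type*) [Field k] : S k →+* S k ⧸ II k :=
  Ideal.Quotient.mk (II k)

/-- the base map `k[x,z] → S k ⧸ II k` -/
def base (k : Type*) [Field k] : R2 k →+* S k ⧸ II k :=
  MvPolynomial.eval₂Hom ((mkQ k).comp MvPolynomial.C) ![mkQ k (X 0), mkQ k (X 2)]

/-- the map `k[x,z][Y] → S k ⧸ II k` sending `Y ↦ y` -/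
def Gpoly (k : Type*) [Field k] : Polynomial (R2 k) →+* S k ⧸ II k :=
  Polynomial.eval₂RingHom (base k) (mkQ k (X 1))

lemma Gpoly_pq : Gpoly k (pq k) = 0 := by
  show Polynomial.eval₂ (base k) (mkQ k (X 1)) (pq k) = 0
  rw [pq, Polynomial.eval₂_sub, Polynomial.eval₂_X_pow, Polynomial.eval₂_C]
  rw [base]
  rw [map_mul]
  simp only [eval₂Hom_X', Matrix.cons_val_zero, Matrix.cons_val_one, Matrix.head_cons]
  rw [mkQ, ← map_pow, ← map_mul, ← map_sub, Ideal.Quotient.eq_zero_iff_mem]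
  have : (X 1 : S k) ^ 2 - X 0 * X 2 = -(X 0 * X 2 - X 1 ^ 2) := by ring
  rw [this]
  exact neg_mem (Ideal.subset_span (by simp [II]))

/-- the inverse map `D → S k ⧸ II k` -/
def G (k : Type*) [Field k] : D k →+* S k ⧸ II k :=
  Ideal.Quotient.lift (Ideal.span {pq k}) (Gpoly k) (by
    intro a ha
    obtain ⟨c, rfl⟩ := Ideal.mem_span_singleton.mp ha
    rw [map_mul, Gpoly_pq, zero_mul])

/-- the induced map `S k ⧸ II k → D k` -/
def Flift (k : Type*) [Field k] : S k ⧸ II k →+* D k :=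
  Ideal.Quotient.lift (II k) (F k).toRingHom (fun a ha => RingHom.mem_ker.mp (II_le_ker k ha))

lemma G_comp_Flift : (G k).comp (Flift k) = RingHom.id _ := by
  refine Ideal.Quotient.ringHom_ext ?_
  refine MvPolynomial.ringHom_ext ?_ ?_
  · intro a
    simp only [RingHom.comp_apply, RingHom.id_apply]
    show G k (Flift k (Ideal.Quotient.mk (II k) (C a))) = Ideal.Quotient.mk (II k) (C a)
    rw [Flift, Ideal.Quotient.lift_mk]
    show G k (F k (C a)) = _
    rw [show (F k) (C a) = mkD k (Polynomial.C (MvPolynomial.C a)) by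
      simp only [F, mkD, algHom_C]
      rw [IsScalarTower.algebraMap_apply k (Polynomial (R2 k)) (D k),
        Polynomial.algebraMap_apply, MvPolynomial.algebraMap_eq, Ideal.Quotient.algebraMap_eq]]
    rw [G, mkD, Ideal.Quotient.lift_mk, Gpoly, Polynomial.coe_eval₂RingHom, Polynomial.eval₂_C,
      base, eval₂Hom_C]
    rfl
  · intro i
    simp only [RingHom.comp_apply, RingHom.id_apply]
    show G k (Flift k (Ideal.Quotient.mk (II k) (X i))) = Ideal.Quotient.mk (II k) (X i)
    rw [Flift, Ideal.Quotient.lift_mk]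
    show G k (F k (X i)) = _
    fin_cases i
    · show G k (F k (X 0)) = Ideal.Quotient.mk (II k) (X 0)
      rw [show (F k) (X 0) = mkD k (Polynomial.C (X 0)) by simp [F]]
      rw [G, mkD, Ideal.Quotient.lift_mk, Gpoly, Polynomial.coe_eval₂RingHom, Polynomial.eval₂_C,
        base]
      simp [mkQ]
    · show G k (F k (X 1)) = Ideal.Quotient.mk (II k) (X 1)
      rw [show (F k) (X 1) = mkD k Polynomial.X by simp [F]]
      rw [G, mkD, Ideal.Quotient.lift_mk, Gpoly, Polynomial.coe_eval₂RingHom, Polynomial.eval₂_X]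
      rfl
    · show G k (F k (X 2)) = Ideal.Quotient.mk (II k) (X 2)
      rw [show (F k) (X 2) = mkD k (Polynomial.C (X 1)) by simp [F]]
      rw [G, mkD, Ideal.Quotient.lift_mk, Gpoly, Polynomial.coe_eval₂RingHom, Polynomial.eval₂_C,
        base]
      simp [mkQ]
    · show G k (F k (X 3)) = Ideal.Quotient.mk (II k) (X 3)
      rw [show (F k) (X 3) = 0 by simp [F], map_zero]
      rw [eq_comm, show Ideal.Quotient.mk (II k) (X 3) = mkQ k (X 3) from rfl, mkQ,
        Ideal.Quotient.eq_zero_iff_mem]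
      exact Ideal.subset_span (by simp [II])
    · show G k (F k (X 4)) = Ideal.Quotient.mk (II k) (X 4)
      rw [show (F k) (X 4) = 0 by simp [F], map_zero]
      rw [eq_comm, show Ideal.Quotient.mk (II k) (X 4) = mkQ k (X 4) from rfl, mkQ,
        Ideal.Quotient.eq_zero_iff_mem]
      exact Ideal.subset_span (by simp [II])

lemma Flift_injective : Function.Injective (Flift k) := by
  have h : Function.LeftInverse (G k) (Flift k) := fun x => by
    have := RingHom.congr_fun (G_comp_Flift k) x
    simpa using this
  exact h.injective

lemma II_isPrime : (II k).IsPrime := by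
  haveI : IsDomain (S k ⧸ II k) :=
    Function.Injective.isDomain (Flift k) (Flift_injective k)
  exact (Ideal.Quotient.isDomain_iff_prime _).mp inferInstance

end Stmt5Aux

theorem stmt_5 (k : Type*) [Field k] :
    (Ideal.span {(X 0 * X 2 - X 1 ^ 2 : S k), X 0 * X 3 - X 1 * X 4,
        X 1 * X 3 - X 2 * X 4, X 3 ^ 2, X 3 * X 4, X 4 ^ 2}).radical =
      Ideal.span {(X 0 * X 2 - X 1 ^ 2 : S k), X 3, X 4} := by
  have hIp : (Stmt5Aux.II k).IsPrime := Stmt5Aux.II_isPrime k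
  have hX3 : (X 3 : S k) ∈ Stmt5Aux.II k := Ideal.subset_span (by simp [Stmt5Aux.II])
  have hX4 : (X 4 : S k) ∈ Stmt5Aux.II k := Ideal.subset_span (by simp [Stmt5Aux.II])
  show _ = Stmt5Aux.II k
  apply le_antisymm
  · have hJI : Ideal.span {(X 0 * X 2 - X 1 ^ 2 : S k), X 0 * X 3 - X 1 * X 4,
        X 1 * X 3 - X 2 * X 4, X 3 ^ 2, X 3 * X 4, X 4 ^ 2} ≤ Stmt5Aux.II k := by
      rw [Ideal.span_le]
      rintro p hp
      simp only [Set.mem_insert_iff, Set.mem_singleton_iff] at hp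
      rcases hp with rfl | rfl | rfl | rfl | rfl | rfl
      · exact Ideal.subset_span (by simp [Stmt5Aux.II])
      · exact Ideal.sub_mem _ ((Stmt5Aux.II k).mul_mem_left _ hX3)
          ((Stmt5Aux.II k).mul_mem_left _ hX4)
      · exact Ideal.sub_mem _ ((Stmt5Aux.II k).mul_mem_left _ hX3)
          ((Stmt5Aux.II k).mul_mem_left _ hX4)
      · rw [pow_two]; exact (Stmt5Aux.II k).mul_mem_left _ hX3
      · exact (Stmt5Aux.II k).mul_mem_left _ hX4
      · rw [pow_two]; exact (Stmt5Aux.II k).mul_mem_left _ hX4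
    calc (Ideal.span {(X 0 * X 2 - X 1 ^ 2 : S k), X 0 * X 3 - X 1 * X 4,
        X 1 * X 3 - X 2 * X 4, X 3 ^ 2, X 3 * X 4, X 4 ^ 2}).radical
        ≤ (Stmt5Aux.II k).radical := Ideal.radical_mono hJI
      _ = Stmt5Aux.II k := hIp.radical
  · rw [Stmt5Aux.II, Ideal.span_le]
    rintro p hp
    simp only [Set.mem_insert_iff, Set.mem_singleton_iff] at hp
    rcases hp with rfl | rfl | rfl
    · exact Ideal.le_radical (Ideal.subset_span (by simp))
    · exact Ideal.mem_radical_iff.mpr ⟨2, Ideal.subset_span (by simp)⟩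
    · exact Ideal.mem_radical_iff.mpr ⟨2, Ideal.subset_span (by simp)⟩
end
end

section
/- In ℚ[x, x⁻¹], define p_n(x) = ∑_{k=0}^{n} x^{n−2k}, σ₂(f)(x) := (f(x)² + f(x²))/2 and σ₃(f)(x) := (f(x)³ + 3f(x)f(x²) + 2f(x³))/6 for Laurent polynomials f. Then for every d ≥ 3: σ₃(p_d) = p_{3d} + σ₂(p_{d−2})·p_d − p₁·σ₃(p_{d−3}). -/
open Finset LaurentPolynomial

/-- `p a n = ∑_{k=0}^{n} (x^a)^{n-2k}`: the character of `Sⁿ(V)` for the standard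
2-dimensional representation, evaluated at `diag(x^a, x^{-a})`; so `p 1 n = pₙ(x)`,
`p 2 n = pₙ(x²)`, `p 3 n = pₙ(x³)`. -/
noncomputable def p (a : ℤ) (n : ℕ) : LaurentPolynomial ℚ :=
  ∑ k ∈ Finset.range (n + 1), LaurentPolynomial.T (a * ((n : ℤ) - 2 * k))

/-- the character of `S²(S^d V)` -/
noncomputable def σ₂ (d : ℕ) : LaurentPolynomial ℚ :=
  (2 : ℚ)⁻¹ • ((p 1 d) ^ 2 + p 2 d)

/-- the character of `S³(S^d V)` -/
noncomputable def σ₃ (d : ℕ) : LaurentPolynomial ℚ :=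
  (6 : ℚ)⁻¹ • ((p 1 d) ^ 3 + 3 * p 1 d * p 2 d + 2 * p 3 d)

lemma key_s12 (a : ℤ) (n : ℕ) :
    (T a - T (-a) : LaurentPolynomial ℚ) * p a n
      = T (a * (n + 1)) - T (-(a * (n + 1))) := by
  have h : ∀ k : ℕ, (T a - T (-a) : LaurentPolynomial ℚ) * T (a * ((n : ℤ) - 2 * k))
      = T (a * ((n : ℤ) + 1 - 2 * k)) - T (a * ((n : ℤ) + 1 - 2 * ((k : ℤ) + 1))) := by
    intro k
    rw [sub_mul, ← T_add, ← T_add]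
    ring_nf
  unfold p
  rw [Finset.mul_sum]
  have h2 : ∀ k ∈ Finset.range (n + 1),
      (T a - T (-a) : LaurentPolynomial ℚ) * T (a * ((n : ℤ) - 2 * k))
        = (fun j : ℕ => (T (a * ((n : ℤ) + 1 - 2 * j)) : LaurentPolynomial ℚ)) k
          - (fun j : ℕ => (T (a * ((n : ℤ) + 1 - 2 * j)) : LaurentPolynomial ℚ)) (k + 1) := by
    intro k _
    simp only [h k]
    push_cast
    ring_nf
  rw [Finset.sum_congr rfl h2,
    Finset.sum_range_sub' (fun j : ℕ => (T (a * ((n : ℤ) + 1 - 2 * j)) : LaurentPolynomial ℚ))]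
  push_cast
  ring_nf

lemma T_ne (j k : ℤ) (h : j ≠ k) : (T j : LaurentPolynomial ℚ) - T k ≠ 0 := by
  intro hh
  rw [sub_eq_zero] at hh
  have := congrArg (fun f : LaurentPolynomial ℚ => f.coeff j) hh
  simp [T_apply, Ne.symm h] at this

lemma T_nonzero (k : ℤ) : (T k : LaurentPolynomial ℚ) ≠ 0 := by
  intro h
  have := congrArg (fun f : LaurentPolynomial ℚ => f.coeff k) h
  simp only [T_apply, if_pos rfl] at this
  exact one_ne_zero this

lemma key2 (a : ℤ) (n : ℕ) :
    (T (2 * a) - 1 : LaurentPolynomial ℚ) * T (a * (n + 1)) * p a n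
      = (T (2 * (a * (n + 1))) - 1) * T a := by
  have h := key_s12 a n
  have e1 : (T (2 * a) - 1 : LaurentPolynomial ℚ) * T (a * (n + 1))
      = (T a * T (a * (n + 1))) * (T a - T (-a)) := by
    simp only [mul_sub, sub_mul, one_mul, mul_one, ← T_add]
    ring_nf
  rw [e1, mul_assoc, h]
  simp only [mul_sub, sub_mul, one_mul, mul_one, ← T_add]
  ring_nf

lemma E (a c e m n : ℕ) (h : (a : ℤ) * ((n : ℤ) + 1) = c * (m : ℤ) + e) :
    ((T 1 : LaurentPolynomial ℚ) ^ (2 * a) - 1) * (T (m : ℤ) ^ c * T 1 ^ e) * p a n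
      = (T (m : ℤ) ^ (2 * c) * T 1 ^ (2 * e) - 1) * T 1 ^ a := by
  have h2 := key2 a n
  simp only [T_pow, mul_one]
  rw [← T_add, ← T_add]
  have g1 : ((2 * a : ℕ) : ℤ) = 2 * (a : ℤ) := by push_cast; ring
  have g2 : ((c : ℕ) : ℤ) * (m : ℤ) + (e : ℕ) = (a : ℤ) * ((n : ℤ) + 1) := h.symm
  have g3 : ((2 * c : ℕ) : ℤ) * (m : ℤ) + ((2 * e : ℕ) : ℤ)
      = 2 * ((a : ℤ) * ((n : ℤ) + 1)) := by push_cast at h ⊢; linarith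
  rw [g1, g2, g3]
  exact h2

lemma hσ3 (n : ℕ) : (6 : LaurentPolynomial ℚ) * σ₃ n
    = (p 1 n) ^ 3 + 3 * p 1 n * p 2 n + 2 * p 3 n := by
  rw [σ₃, Algebra.smul_def, ← C_eq_algebraMap, ← mul_assoc,
    show ((6 : LaurentPolynomial ℚ)) = LaurentPolynomial.C ((6 : ℚ)) from (map_ofNat _ 6).symm,
    ← map_mul]
  norm_num

lemma hσ2 (n : ℕ) : (2 : LaurentPolynomial ℚ) * σ₂ n = (p 1 n) ^ 2 + p 2 n := by
  rw [σ₂, Algebra.smul_def, ← C_eq_algebraMap, ← mul_assoc,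
    show ((2 : LaurentPolynomial ℚ)) = LaurentPolynomial.C ((2 : ℚ)) from (map_ofNat _ 2).symm,
    ← map_mul]
  norm_num

set_option maxHeartbeats 4000000 in
theorem stmt_12 (d : ℕ) (hd : 3 ≤ d) :
    σ₃ d = p 1 (3 * d) + σ₂ (d - 2) * p 1 d - p 1 1 * σ₃ (d - 3) := by
  obtain ⟨m, rfl⟩ : ∃ m, d = m + 3 := ⟨d - 3, by omega⟩
  have g2 : (m + 3) - 2 = m + 1 := by omega
  have g3 : (m + 3) - 3 = m := by omega
  rw [g2, g3]
  have h1 := hσ3 (m + 3)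
  have h2 := hσ2 (m + 1)
  have h3 := hσ3 m
  have E1 := E 1 1 4 m (m + 3) (by push_cast; ring)
  have E2 := E 2 2 8 m (m + 3) (by push_cast; ring)
  have E3 := E 3 3 12 m (m + 3) (by push_cast; ring)
  have EQ := E 1 3 10 m (3 * (m + 3)) (by push_cast; ring)
  have ER1 := E 1 1 2 m (m + 1) (by push_cast; ring)
  have ER2 := E 2 2 4 m (m + 1) (by push_cast; ring)
  have EU1 := E 1 1 1 m m (by push_cast; ring)
  have EU2 := E 2 2 2 m m (by push_cast; ring)
  have EU3 := E 3 3 3 m m (by push_cast; ring)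
  have EW := E 1 0 2 m 1 (by norm_num)
  simp only [Nat.cast_one, Nat.cast_ofNat] at E1 E2 E3 EQ ER1 ER2 EU1 EU2 EU3 EW
  have hne : ∀ a : ℕ, a ≠ 0 → (T 1 : LaurentPolynomial ℚ) ^ a - 1 ≠ 0 := by
    intro a ha
    rw [T_pow, mul_one]
    have := T_ne (a : ℤ) 0 (by exact_mod_cast ha)
    simpa [T_zero] using this
  have h12 : (12 : LaurentPolynomial ℚ) ≠ 0 := by
    intro h
    have h' : (LaurentPolynomial.C (12 : ℚ)) = 0 := by rwa [map_ofNat]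
    have := congrArg (fun f : LaurentPolynomial ℚ => f.coeff 0) h'
    norm_num [LaurentPolynomial.C_apply] at this
  have hF : (12 : LaurentPolynomial ℚ) *
      ((T 1 ^ 2 - 1) ^ 4 * (T 1 ^ 4 - 1) * (T 1 ^ 6 - 1) * T (m:ℤ) ^ 3 * T 1 ^ 12) ≠ 0 := by
    refine mul_ne_zero h12 ?_
    refine mul_ne_zero (mul_ne_zero (mul_ne_zero (mul_ne_zero
      (pow_ne_zero _ (hne 2 (by norm_num))) (hne 4 (by norm_num))) (hne 6 (by norm_num)))
      (pow_ne_zero _ (T_nonzero _))) (pow_ne_zero _ (T_nonzero _))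
  apply mul_left_cancel₀ hF
  linear_combination (norm := ring1)
    (2 * ((T 1 ^ 2 - 1) ^ 4 * (T 1 ^ 4 - 1) * (T 1 ^ 6 - 1) * T (m:ℤ) ^ 3 * T 1 ^ 12 : LaurentPolynomial ℚ)) * h1 +
    (-6 * ((T 1 ^ 2 - 1) ^ 4 * (T 1 ^ 4 - 1) * (T 1 ^ 6 - 1) * T (m:ℤ) ^ 3 * T 1 ^ 12 : LaurentPolynomial ℚ) * (p 1 (m+3))) * h2 +
    (2 * ((T 1 ^ 2 - 1) ^ 4 * (T 1 ^ 4 - 1) * (T 1 ^ 6 - 1) * T (m:ℤ) ^ 3 * T 1 ^ 12 : LaurentPolynomial ℚ) * (p 1 1)) * h3 +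
    ((2) * ((T 1 ^ 2 - 1) ^ 3 * (T 1 ^ 4 - 1) ^ 1 * (T 1 ^ 6 - 1) ^ 1 * T (m:ℤ) ^ 2 * T 1 ^ 8) * (p 1 (m+3)) * (p 1 (m+3)) + (2) * ((T (m:ℤ) ^ 2 * T 1 ^ 8 - 1) * T 1 ^ 1) * ((T 1 ^ 2 - 1) ^ 2 * (T 1 ^ 4 - 1) ^ 1 * (T 1 ^ 6 - 1) ^ 1 * T (m:ℤ) ^ 1 * T 1 ^ 4) * (p 1 (m+3)) + (2) * ((T (m:ℤ) ^ 2 * T 1 ^ 8 - 1) * T 1 ^ 1) * ((T (m:ℤ) ^ 2 * T 1 ^ 8 - 1) * T 1 ^ 1) * ((T 1 ^ 2 - 1) ^ 1 * (T 1 ^ 4 - 1) ^ 1 * (T 1 ^ 6 - 1) ^ 1) + (6) * ((T 1 ^ 2 - 1) ^ 3 * (T 1 ^ 4 - 1) ^ 1 * (T 1 ^ 6 - 1) ^ 1 * T (m:ℤ) ^ 2 * T 1 ^ 8) * (p 2 (m+3)) + (-6) * ((T (m:ℤ) ^ 2 * T 1 ^ 4 - 1) * T 1 ^ 1) * ((T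 (m:ℤ) ^ 2 * T 1 ^ 4 - 1) * T 1 ^ 1) * ((T 1 ^ 2 - 1) ^ 1 * (T 1 ^ 4 - 1) ^ 1 * (T 1 ^ 6 - 1) ^ 1 * T 1 ^ 4) + (-6) * ((T (m:ℤ) ^ 4 * T 1 ^ 8 - 1) * T 1 ^ 2) * ((T 1 ^ 2 - 1) ^ 3 * (T 1 ^ 6 - 1) ^ 1 * T 1 ^ 4)) * E1 +
    ((6) * ((T (m:ℤ) ^ 2 * T 1 ^ 8 - 1) * T 1 ^ 1) * ((T 1 ^ 2 - 1) ^ 3 * (T 1 ^ 6 - 1) ^ 1)) * E2 +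
    ((4) * ((T 1 ^ 2 - 1) ^ 4 * (T 1 ^ 4 - 1) ^ 1)) * E3 +
    ((-12) * ((T 1 ^ 2 - 1) ^ 3 * (T 1 ^ 4 - 1) ^ 1 * (T 1 ^ 6 - 1) ^ 1 * T 1 ^ 2)) * EQ +
    ((-6) * ((T 1 ^ 2 - 1) ^ 3 * (T 1 ^ 4 - 1) ^ 1 * (T 1 ^ 6 - 1) ^ 1 * T (m:ℤ) ^ 2 * T 1 ^ 10) * (p 1 (m+1)) * (p 1 (m+3)) + (-6) * ((T (m:ℤ) ^ 2 * T 1 ^ 4 - 1) * T 1 ^ 1) * ((T 1 ^ 2 - 1) ^ 2 * (T 1 ^ 4 - 1) ^ 1 * (T 1 ^ 6 - 1) ^ 1 * T (m:ℤ) ^ 1 * T 1 ^ 8) * (p 1 (m+3))) * ER1 +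
    ((-6) * ((T 1 ^ 2 - 1) ^ 4 * (T 1 ^ 6 - 1) ^ 1 * T (m:ℤ) ^ 1 * T 1 ^ 8) * (p 1 (m+3))) * ER2 +
    ((2) * ((T 1 ^ 2 - 1) ^ 3 * (T 1 ^ 4 - 1) ^ 1 * (T 1 ^ 6 - 1) ^ 1 * T (m:ℤ) ^ 3 * T 1 ^ 10) * (p 1 m) * (p 1 m) * (p 1 m) + (6) * ((T 1 ^ 2 - 1) ^ 3 * (T 1 ^ 4 - 1) ^ 1 * (T 1 ^ 6 - 1) ^ 1 * T (m:ℤ) ^ 3 * T 1 ^ 10) * (p 1 m) * (p 2 m) + (4) * ((T 1 ^ 2 - 1) ^ 3 * (T 1 ^ 4 - 1) ^ 1 * (T 1 ^ 6 - 1) ^ 1 * T (m:ℤ) ^ 3 * T 1 ^ 10) * (p 3 m)) * EW +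
    ((2) * ((T (m:ℤ) ^ 0 * T 1 ^ 4 - 1) * T 1 ^ 1) * ((T 1 ^ 2 - 1) ^ 2 * (T 1 ^ 4 - 1) ^ 1 * (T 1 ^ 6 - 1) ^ 1 * T (m:ℤ) ^ 2 * T 1 ^ 9) * (p 1 m) * (p 1 m) + (2) * ((T (m:ℤ) ^ 0 * T 1 ^ 4 - 1) * T 1 ^ 1) * ((T (m:ℤ) ^ 2 * T 1 ^ 2 - 1) * T 1 ^ 1) * ((T 1 ^ 2 - 1) ^ 1 * (T 1 ^ 4 - 1) ^ 1 * (T 1 ^ 6 - 1) ^ 1 * T (m:ℤ) ^ 1 * T 1 ^ 8) * (p 1 m) + (2) * ((T (m:ℤ) ^ 0 * T 1 ^ 4 - 1) * T 1 ^ 1) * ((T (m:ℤ) ^ 2 * T 1 ^ 2 - 1) * T 1 ^ 1) * ((T (m:ℤ) ^ 2 * T 1 ^ 2 - 1) * T 1 ^ 1) * ((T 1 ^ 4 - 1) ^ 1 * (T 1 ^ 6 - 1) ^ 1 * T 1 ^ 7) + (6) * ((T (m:ℤ) ^ 0 * T 1 ^ 4 - 1) * T 1 ^ 1) * ((T 1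 ^ 2 - 1) ^ 2 * (T 1 ^ 4 - 1) ^ 1 * (T 1 ^ 6 - 1) ^ 1 * T (m:ℤ) ^ 2 * T 1 ^ 9) * (p 2 m)) * EU1 +
    ((6) * ((T (m:ℤ) ^ 0 * T 1 ^ 4 - 1) * T 1 ^ 1) * ((T (m:ℤ) ^ 2 * T 1 ^ 2 - 1) * T 1 ^ 1) * ((T 1 ^ 2 - 1) ^ 2 * (T 1 ^ 6 - 1) ^ 1 * T 1 ^ 7)) * EU2 +
    ((4) * ((T (m:ℤ) ^ 0 * T 1 ^ 4 - 1) * T 1 ^ 1) * ((T 1 ^ 2 - 1) ^ 3 * (T 1 ^ 4 - 1) ^ 1 * T 1 ^ 7)) * EU3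
end
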